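/- Let y be an even nonnegative integer, b a nonnegative integer, x=2b+1, and let U, D, B ⊆ {1,…,⌊N/2⌋} with n=|U∪D|, |B|=b, N=2b+1+y+2n and B∩(U∪D)=∅. Write u=|U|, d=|D|, m=2n−u−d, D̄={N+1−t : t∈D}, O := (U∪D∪B) ∪ {N+1−w : w ∈ U∪D∪B} and O^c := {1,…,N}∖O, and assume the central position (N+1)/2 does not belong to U∪D∪B. Then M_c(CS_{2b+1,y}(U;D;B)) = M(T_{y+u+d, 2b+1+m}((O^c∖{(N+1)/2}) ∪ U ∪ D̄)), i.e. the number of centrally symmetric lozenge tilings of CS_{2b+1,y}(U;D;B) equals the number of lozenge tilings of the dented semihexagon with north side 2b+1+m, slanted sides y+u+d, base N, and dents at the positions of (O^c∖{(N+1)/2}) ∪ U ∪ D̄. -/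

import Mathlib

open Finset

namespace Shuf

/-- A unit triangle of the triangular lattice: `(a, b, o)` where `o = false` is the
up-pointing unit triangle with vertices `(a,b), (a+1,b), (a,b+1)` (in the lattice
coordinates whose embedding is `(a,b) ↦ (a + b/2, b·√3/2)`), and `o = true` is the
down-pointing unit triangle with vertices `(a+1,b), (a,b+1), (a+1,b+1)`. -/
abbrev Tri : Type := ℤ × ℤ × Bool

/-- Adjacency from an up-pointing triangle `s` to a down-pointing triangle `t`
(sharing a unit edge). -/
def adjUD (s t : Tri) : Prop :=
  s.2.2 = false ∧ t.2.2 = true ∧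
    ((t.1 = s.1 ∧ t.2.1 = s.2.1) ∨ (t.1 = s.1 - 1 ∧ t.2.1 = s.2.1) ∨
      (t.1 = s.1 ∧ t.2.1 = s.2.1 - 1))

/-- Two unit triangles share a unit edge (form a lozenge). -/
def adj (s t : Tri) : Prop := adjUD s t ∨ adjUD t s

/-- A lozenge tiling of the region `R` with barrier edges `Bar`, encoded as the
involution pairing each unit triangle of `R` with the one it is matched to. -/
def IsTiling (R : Set Tri) (Bar : Set (Tri × Tri)) (f : Tri → Tri) : Prop :=
  (∀ t, t ∉ R → f t = t) ∧
    ∀ t ∈ R, f t ∈ R ∧ adj t (f t) ∧ f (f t) = t ∧ (t, f t) ∉ Bar ∧ (f t, t) ∉ Bar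

/-- `M R Bar` : the number of lozenge tilings of the region `R` with barriers `Bar`. -/
noncomputable def M (R : Set Tri) (Bar : Set (Tri × Tri)) : ℕ :=
  Nat.card {f : Tri → Tri // IsTiling R Bar f}

/-- 180° rotation about the point `(c.1/2, c.2/2)` (lattice coordinates). -/
def rot (c : ℤ × ℤ) (t : Tri) : Tri := (c.1 - t.1 - 1, c.2 - t.2.1 - 1, !t.2.2)

/-- `Mc c R Bar` : the number of lozenge tilings of `R` invariant under the 180°
rotation about the point `(c.1/2, c.2/2)`. -/
noncomputable def Mc (c : ℤ × ℤ) (R : Set Tri) (Bar : Set (Tri × Tri)) : ℕ :=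
  Nat.card {f : Tri → Tri // IsTiling R Bar f ∧ ∀ t, f (rot c t) = rot c (f t)}

/-- The doubly-dented hexagon whose horizontal axis (at height `0`) runs from the
west vertex `(0,0)` to the east vertex `(L,0)`, whose upper half is a trapezoid of
height `hu` and whose lower half is a trapezoid of height `hd`; the up-pointing unit
triangle just above the axis at position `i` is removed for `i ∈ U`, and the
down-pointing one just below the axis at position `i` is removed for `i ∈ D`
(positions are labelled `1,…,L` from left to right). -/
def HRegion (L hu hd : ℤ) (U D : Set ℤ) : Set Tri :=
  {t | (t.2.2 = false ∧ 0 ≤ t.2.1 ∧ t.2.1 < hu ∧ 0 ≤ t.1 ∧ t.1 + t.2.1 ≤ L - 1 ∧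
          (t.2.1 = 0 → t.1 + 1 ∉ U)) ∨
       (t.2.2 = true ∧ 0 ≤ t.2.1 ∧ t.2.1 < hu ∧ 0 ≤ t.1 ∧ t.1 + t.2.1 ≤ L - 2) ∨
       (t.2.2 = false ∧ -hd ≤ t.2.1 ∧ t.2.1 ≤ -1 ∧ -t.2.1 ≤ t.1 ∧ t.1 ≤ L - 1) ∨
       (t.2.2 = true ∧ -hd ≤ t.2.1 ∧ t.2.1 ≤ -1 ∧ -t.2.1 - 1 ≤ t.1 ∧ t.1 ≤ L - 1 ∧
          (t.2.1 = -1 → t.1 + 1 ∉ D))}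

/-- The barrier edges along the axis at the positions of `B`: the barrier at
position `i` forbids the vertical lozenge formed by the up-triangle just above and
the down-triangle just below the `i`-th unit segment of the axis. -/
def HBar (B : Set ℤ) : Set (Tri × Tri) :=
  {e | ∃ i ∈ B, e = ((i - 1, 0, false), (i - 1, -1, true)) ∨
                 e = ((i - 1, -1, true), (i - 1, 0, false))}

/-- `MH x y U D B` : the number of lozenge tilings of the doubly-dented hexagon
`H_{x,y}(U; D; B)`. -/
noncomputable def MH (x y : ℕ) (U D B : Finset ℤ) : ℕ :=
  M (HRegion (x + y + (U ∪ D).card) (y + U.card) (y + D.card) ↑U ↑D) (HBar ↑B)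

/-- `mir N W = {N + 1 - w : w ∈ W}`, the reflection of an index set. -/
def mir (N : ℤ) (W : Finset ℤ) : Finset ℤ := W.image (fun w => N + 1 - w)

/-- `MCS x y U D B` : the number of lozenge tilings of the centrally symmetric
doubly-dented hexagon `CS_{x,y}(U; D; B) = H_{x,y}(U ∪ D̄; D ∪ Ū; B ∪ B̄)`,
where `N = x + y + 2|U ∪ D|` and `W̄ = {N+1-w : w ∈ W}`. -/
noncomputable def MCS (x y : ℕ) (U D B : Finset ℤ) : ℕ :=
  MH x y (U ∪ mir (x + y + 2 * (U ∪ D).card) D) (D ∪ mir (x + y + 2 * (U ∪ D).card) U)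
    (B ∪ mir (x + y + 2 * (U ∪ D).card) B)

/-- `McCS x y U D B` : the number of centrally symmetric lozenge tilings of
`CS_{x,y}(U; D; B)` (tilings invariant under the 180° rotation about the center
`(N/2, 0)` of the region, `N = x + y + 2|U ∪ D|`). -/
noncomputable def McCS (x y : ℕ) (U D B : Finset ℤ) : ℕ :=
  let N : ℤ := x + y + 2 * (U ∪ D).card
  let U' : Finset ℤ := U ∪ mir N D
  let D' : Finset ℤ := D ∪ mir N U
  Mc (N, 0)
    (HRegion (x + y + (U' ∪ D').card) (y + U'.card) (y + D'.card) ↑U' ↑D')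
    (HBar ↑(B ∪ mir N B))

/-- `Δprod S = ∏_{s < s' ∈ S} (s' - s)`. -/
def Δprod (S : Finset ℤ) : ℤ :=
  ∏ p ∈ (S ×ˢ S).filter (fun p => p.1 < p.2), (p.2 - p.1)

/-- MacMahon's box formula `PP(a,b,c)`. -/
def PP (a b c : ℕ) : ℚ :=
  ∏ i ∈ Icc 1 a, ∏ j ∈ Icc 1 b, ∏ k ∈ Icc 1 c,
    (((i : ℚ) + j + k - 1) / ((i : ℚ) + j + k - 2))

/-- The hyperfactorial `H(n) = 0!·1!⋯(n-1)!`. -/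
def hyperfac (n : ℕ) : ℕ := ∏ k ∈ range n, k.factorial

/-- The Pochhammer symbol `(q)_r = q(q+1)⋯(q+r-1)`. -/
def poch (q : ℚ) (r : ℕ) : ℚ := ∏ i ∈ range r, (q + i)

/-- The dented semihexagon `T_{a,b}(S)`: the trapezoid with north side `b`, slanted
sides `a` and base `a + b` lying above the horizontal axis (base from `(0,0)` to
`(a+b,0)`), with the up-pointing unit triangles at the positions of `S` removed
from its base. -/
def TRegion (a b : ℤ) (S : Set ℤ) : Set Tri :=
  {t | (t.2.2 = false ∧ 0 ≤ t.2.1 ∧ t.2.1 < a ∧ 0 ≤ t.1 ∧ t.1 + t.2.1 ≤ a + b - 1 ∧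
          (t.2.1 = 0 → t.1 + 1 ∉ S)) ∨
       (t.2.2 = true ∧ 0 ≤ t.2.1 ∧ t.2.1 < a ∧ 0 ≤ t.1 ∧ t.1 + t.2.1 ≤ a + b - 2)}

/-- `MT a b S` : the number of lozenge tilings of `T_{a,b}(S)`. -/
noncomputable def MT (a b : ℤ) (S : Finset ℤ) : ℕ := M (TRegion a b ↑S) ∅

/-- The trapezoid with base `L` (from `(0,0)` to `(L,0)`), height `h`. -/
def trapRegion (L h : ℤ) : Set Tri :=
  {t | (t.2.2 = false ∧ 0 ≤ t.2.1 ∧ t.2.1 < h ∧ 0 ≤ t.1 ∧ t.1 + t.2.1 ≤ L - 1) ∨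
       (t.2.2 = true ∧ 0 ≤ t.2.1 ∧ t.2.1 < h ∧ 0 ≤ t.1 ∧ t.1 + t.2.1 ≤ L - 2)}

/-- The unit triangles of the up-pointing triangle of side `s` whose base runs from
`(p,0)` to `(p+s,0)` (lying above the axis). -/
def upTriSet (p : ℤ) (s : ℕ) : Set Tri :=
  {t | t.2.2 = false ∧ 0 ≤ t.2.1 ∧ p ≤ t.1 ∧ t.1 + t.2.1 ≤ p + s - 1} ∪
  {t | t.2.2 = true ∧ 0 ≤ t.2.1 ∧ p ≤ t.1 ∧ t.1 + t.2.1 ≤ p + s - 2}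

/-- The unit triangles of the down-pointing triangle of side `s` whose top edge runs
from `(p,0)` to `(p+s,0)` (lying below the axis). -/
def downTriSet (p : ℤ) (s : ℕ) : Set Tri :=
  {t | t.2.2 = true ∧ -(s : ℤ) ≤ t.2.1 ∧ t.2.1 ≤ -1 ∧ p - t.2.1 - 1 ≤ t.1 ∧ t.1 ≤ p + s - 1} ∪
  {t | t.2.2 = false ∧ -(s : ℤ) ≤ t.2.1 ∧ t.2.1 ≤ -1 ∧ p - t.2.1 ≤ t.1 ∧ t.1 ≤ p + s - 1}

/-- A triangle of side `s` along the axis starting at `p`, up- or down-pointing. -/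
def triSet (p : ℤ) (s : ℕ) (up : Bool) : Set Tri :=
  if up then upTriSet p s else downTriSet p s

/-- The removed triangles, at the dents given by a run/gap sequence
`a₁ (run), a₂ (gap), a₃ (run), …` starting at `p`. -/
def seqRemoved : ℤ → List ℕ → Set Tri
  | _, [] => ∅
  | p, [s] => upTriSet p s
  | p, s :: g :: r => upTriSet p s ∪ seqRemoved (p + s + g) r

/-- `oSum [a₁,a₂,…] = a₁ + a₃ + a₅ + ⋯`. -/
def oSum : List ℕ → ℕ
  | [] => 0
  | [s] => s
  | s :: _ :: r => s + oSum r

/-- `sFun l = s(a₁,…,a_r)` : the number of lozenge tilings of the generalized dented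
semihexagon `S(a₁,…,a_r)` (trapezoid of base `a₁+⋯+a_r` and height `a₁+a₃+⋯`, with
up-pointing triangles of sides `a₁, a₃, …` removed from its base at mutual
distances `a₂, a₄, …`, the first one touching the west vertex). -/
noncomputable def sFun (l : List ℕ) : ℕ :=
  M (trapRegion l.sum (oSum l) \ seqRemoved 0 l) ∅

/-- A fern: a chain of lattice triangles of alternating orientations along the axis,
given by the list of side-lengths and the orientation of the first triangle. -/
structure Fern where
  lengths : List ℕ
  firstUp : Bool

/-- The total length of a fern. -/
def Fern.total (F : Fern) : ℕ := F.lengths.sum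

/-- Sum of the entries at even positions if the flag is `true` (resp. odd positions
if `false`). -/
def upLenAux : Bool → List ℕ → ℕ
  | _, [] => 0
  | true, s :: r => s + upLenAux false r
  | false, _ :: r => upLenAux true r

/-- The sum of side-lengths of the up-pointing triangles of a fern. -/
def Fern.up (F : Fern) : ℕ := upLenAux F.firstUp F.lengths

/-- The sum of side-lengths of the down-pointing triangles of a fern. -/
def Fern.down (F : Fern) : ℕ := upLenAux (!F.firstUp) F.lengths

/-- The image of a fern under 180° rotation. -/
def Fern.rot (F : Fern) : Fern :=
  ⟨F.lengths.reverse, if F.lengths.length % 2 = 1 then !F.firstUp else F.firstUp⟩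

/-- Concatenation of two ferns (the second continuing the alternation of the first). -/
def Fern.cat (F G : Fern) : Fern := ⟨F.lengths ++ G.lengths, F.firstUp⟩

/-- The unit triangles of a chain of triangles of alternating orientations starting
at `p` with the first orientation `o`. -/
def chainSet : ℤ → Bool → List ℕ → Set Tri
  | _, _, [] => ∅
  | p, o, s :: r => triSet p s o ∪ chainSet (p + s) (!o) r

/-- The unit triangles of the ferns `Fs` placed along the axis starting at `p` with
gaps `ds` between consecutive ferns. -/
def fernsSet : ℤ → List Fern → List ℕ → Set Tri
  | _, [], _ => ∅
  | p, F :: Fs, ds => chainSet p F.firstUp F.lengths ∪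
      fernsSet (p + F.total + ds.headI) Fs ds.tail

def totUp (Fs : List Fern) : ℕ := (Fs.map Fern.up).sum
def totDown (Fs : List Fern) : ℕ := (Fs.map Fern.down).sum

/-- The hexagon with ferns removed `R_{x,y}(F₁,…,F_k | d₁,…,d_{k-1})`. -/
def RRegion (x y : ℕ) (Fs : List Fern) (ds : List ℕ) : Set Tri :=
  HRegion (x + y + totUp Fs + totDown Fs) (y + totUp Fs) (y + totDown Fs) ∅ ∅ \
    fernsSet 0 Fs ds

/-- The number of lozenge tilings of `R_{x,y}(F₁,…,F_k | d₁,…,d_{k-1})`. -/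
noncomputable def MR (x y : ℕ) (Fs : List Fern) (ds : List ℕ) : ℕ :=
  M (RRegion x y Fs ds) ∅

/-- The number of centrally symmetric lozenge tilings of
`R_{x,y}(F₁,…,F_k | d₁,…,d_{k-1})` (for a centrally symmetric datum; the center of
the hexagon is the midpoint `(L/2, 0)` of its axis). -/
noncomputable def McR (x y : ℕ) (Fs : List Fern) (ds : List ℕ) : ℕ :=
  Mc ((x + y + totUp Fs + totDown Fs : ℤ), 0) (RRegion x y Fs ds) ∅

/-- The positions (labelled `1,2,…` from the left) of the removed up-pointing unit
triangles just above the axis, for a chain starting at `p` with first orientation `o`. -/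
noncomputable def upRunPos : ℤ → Bool → List ℕ → Finset ℤ
  | _, _, [] => ∅
  | p, true, s :: r => Finset.Icc (p + 1) (p + s) ∪ upRunPos (p + s) false r
  | p, false, s :: r => upRunPos (p + s) true r

/-- The positions of the removed up-pointing unit triangles along the axis for the
ferns `Fs` with gaps `ds`, starting at `p`. -/
noncomputable def upPosAll : ℤ → List Fern → List ℕ → Finset ℤ
  | _, [], _ => ∅
  | p, F :: Fs, ds => upRunPos p F.firstUp F.lengths ∪
      upPosAll (p + F.total + ds.headI) Fs ds.tail

/-- The positions of the removed down-pointing unit triangles along the axis. -/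
noncomputable def downPosAll (p : ℤ) (Fs : List Fern) (ds : List ℕ) : Finset ℤ :=
  upPosAll p (Fs.map (fun F => Fern.mk F.lengths (!F.firstUp))) ds

/-- The unit triangles removed in the generalized dented semihexagon determined by
the maximal runs of the position set `A`: a unit triangle is removed precisely when
the interval of base positions it lies over is contained in `A`. -/
def runRemoved (A : Finset ℤ) : Set Tri :=
  {t | ∀ i ∈ Finset.Icc (t.1 + 1) (t.1 + t.2.1 + (if t.2.2 then 2 else 1)), i ∈ A}

/-- `MS A` : the number of lozenge tilings of the generalized dented semihexagon
`S(e₁, e₂, …)` where `e₁, e₃, …` are the lengths of the maximal runs of `A` and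
`e₂, e₄, …` the gaps between consecutive runs (base `= max A`, height `= |A|`). -/
noncomputable def MS (A : Finset ℤ) : ℕ :=
  M (trapRegion (WithBot.unbotD 0 A.max) A.card \ runRemoved A) ∅

/-- The fern list of `E_{x,y}(F₁,…,F_k | d₁,…,d_{k-1})`:
`F₁,…,F_{k-1}, F_k ∘ F̄_k, F̄_{k-1},…,F̄₁`. -/
def EFerns (Fs : List Fern) : List Fern :=
  Fs.dropLast ++ Fern.cat (Fs.getLastD ⟨[], true⟩) (Fern.rot (Fs.getLastD ⟨[], true⟩)) ::
    (Fs.dropLast.map Fern.rot).reverse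

/-- The gap list of `E_{x,y}` : `d₁,…,d_{k-1},d_{k-1},…,d₁`. -/
def Egaps (ds : List ℕ) : List ℕ := ds ++ ds.reverse

/-- The fern list of `E'_{x,y}(F₁,…,F_k | d₁,…,d_{k-1})` : `F₁,…,F_k,F̄_k,…,F̄₁`. -/
def E'Ferns (Fs : List Fern) : List Fern := Fs ++ (Fs.map Fern.rot).reverse

/-- The gap list of `E'_{x,y}` : `d₁,…,d_{k-1},1,d_{k-1},…,d₁`. -/
def E'gaps (ds : List ℕ) : List ℕ := ds ++ 1 :: ds.reverse

end Shuf


/-!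
A tiling invariant under the rotation is determined by what it does on the upper half of the
hexagon together with the set `C` of positions where a vertical lozenge crosses the axis.
Comparing the numbers of up- and down-pointing unit triangles in the upper half, of height
`y + u + d` and with `u + d` dents on the axis, shows that every tiling has exactly `y` such
crossings, at axis positions that are neither dented nor barred. For a symmetric tiling `C` is
invariant under `i ↦ N + 1 - i`, so since `y` is even it misses the centre; as there are exactly
`y` free positions besides the centre, `C` is forced. Removing these vertical lozenges leaves a
tiling of the upper half with the positions of `C` as extra dents, i.e. of the semihexagon `T`,
and conversely every tiling of `T` extends back, by the forced crossings and by rotation, to a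
unique symmetric tiling.
-/

namespace Shuf

section Lattice

@[simp]
lemma rot_rot (c : ℤ × ℤ) (t : Tri) : rot c (rot c t) = t := by
  obtain ⟨x, j, o⟩ := t
  simp only [rot, Bool.not_not, Prod.mk.injEq]
  refine ⟨?_, ?_, trivial⟩ <;> omega

lemma adjUD_rot (c : ℤ × ℤ) {s t : Tri} (h : adjUD s t) : adjUD (rot c t) (rot c s) := by
  obtain ⟨hs, ht, h⟩ := h
  refine ⟨by simp [rot, ht], by simp [rot, hs], ?_⟩
  simp only [rot]
  omega

lemma adj_rot (c : ℤ × ℤ) {s t : Tri} (h : adj s t) : adj (rot c s) (rot c t) :=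
  h.symm.imp (adjUD_rot c) (adjUD_rot c)

lemma adj_orientation {s t : Tri} (h : adj s t) : t.2.2 = !s.2.2 := by
  rcases h with ⟨h1, h2, -⟩ | ⟨h1, h2, -⟩ <;> simp [h1, h2]

lemma adj_across_axis {s t : Tri} (h : adj s t) (hs : 0 ≤ s.2.1) (ht : t.2.1 < 0) :
    s = (s.1, 0, false) ∧ t = (s.1, -1, true) := by
  obtain ⟨xs, js, os⟩ := s
  obtain ⟨xt, jt, ot⟩ := t
  simp only [adj, adjUD] at h hs ht ⊢
  rcases h with ⟨h1, h2, h3⟩ | ⟨h1, h2, h3⟩ <;> subst h1 h2 <;>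
    simp only [Prod.mk.injEq, and_true, true_and] <;> omega

end Lattice

lemma even_card_iff_notMem_of_reflect {s : Finset ℤ} {m : ℤ} (hs : ∀ i ∈ s, 2 * m - i ∈ s) :
    Even s.card ↔ m ∉ s := by
  have hreflect : (s.filter (· < m)).card = (s.filter (m < ·)).card := by
    refine card_nbij' (2 * m - ·) (2 * m - ·) ?_ ?_ (fun i _ => by simp) (fun i _ => by simp) <;>
      intro i hi <;> simp only [coe_filter, Set.mem_ofPred_eq] at hi ⊢ <;>
      exact ⟨hs i hi.1, by omega⟩
  have hsplit := card_filter_add_card_filter_not (s := s) (· < m)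
  have hsplit' := card_filter_add_card_filter_not (s := s.filter (¬ · < m)) (m < ·)
  have hcenter : (s.filter (¬ · < m)).filter (¬ m < ·) = s.filter (· = m) := by
    rw [filter_filter]
    exact filter_congr fun i _ => by omega
  have hupper : (s.filter (¬ · < m)).filter (m < ·) = s.filter (m < ·) := by
    rw [filter_filter]
    exact filter_congr fun i _ => by omega
  rw [hcenter, hupper, filter_eq'] at hsplit'
  split_ifs at hsplit' with hm
  · simp only [card_singleton] at hsplit'
    simp only [hm, not_true_eq_false, iff_false, Nat.not_even_iff_odd]
    exact ⟨(s.filter (· < m)).card, by omega⟩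
  · simp only [card_empty] at hsplit'
    simp only [hm, not_false_eq_true, iff_true]
    exact ⟨(s.filter (· < m)).card, by omega⟩

section Mirror

variable {N : ℤ}

lemma mem_mir {i : ℤ} {W : Finset ℤ} : i ∈ mir N W ↔ N + 1 - i ∈ W := by
  simp only [mir, mem_image]
  exact ⟨fun ⟨w, hw, hwi⟩ => by rwa [← hwi, sub_sub_cancel], fun h => ⟨_, h, sub_sub_cancel _ _⟩⟩

@[simp]
lemma mir_mir (W : Finset ℤ) : mir N (mir N W) = W := by
  ext i
  rw [mem_mir, mem_mir, sub_sub_cancel]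

lemma card_mir (W : Finset ℤ) : (mir N W).card = W.card :=
  card_image_of_injective _ fun _ _ h => by simpa using h

lemma mir_union (V W : Finset ℤ) : mir N (V ∪ W) = mir N V ∪ mir N W :=
  image_union _ _

lemma mem_mir_sdiff_iff {i : ℤ} {W : Finset ℤ} (hW : mir N W = W) :
    N + 1 - i ∈ Icc 1 N \ W ↔ i ∈ Icc 1 N \ W := by
  rw [mem_sdiff, mem_sdiff, ← mem_mir (W := W), hW, mem_Icc, mem_Icc]
  constructor <;> rintro ⟨h, hi⟩ <;> exact ⟨by omega, hi⟩

end Mirror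

section Regions

variable {N : ℤ}

lemma notMem_of_up_mem_HRegion {L hu hd x : ℤ} {U D : Set ℤ}
    (h : (x, 0, false) ∈ HRegion L hu hd U D) : x + 1 ∉ U := by
  rcases h with ⟨-, -, -, -, -, h⟩ | ⟨h, -⟩ | ⟨-, -, h, -⟩ | ⟨h, -⟩
  · exact h rfl
  · cases h
  · simp at h
  · cases h

lemma notMem_of_down_mem_HRegion {L hu hd x : ℤ} {U D : Set ℤ}
    (h : (x, -1, true) ∈ HRegion L hu hd U D) : x + 1 ∉ D := by
  rcases h with ⟨h, -⟩ | ⟨-, h, -⟩ | ⟨h, -⟩ | ⟨-, -, -, -, -, h⟩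
  · cases h
  · simp at h
  · cases h
  · exact h rfl

lemma bounds_of_mem_HRegion {L hu hd : ℤ} {U D : Set ℤ} {t : Tri} (ht : t ∈ HRegion L hu hd U D)
    (hrow : 0 ≤ t.2.1) : 0 ≤ t.1 ∧ t.1 + t.2.1 < L ∧ t.2.1 < hu := by
  rcases ht with ⟨-, h⟩ | ⟨-, h⟩ | ⟨-, h⟩ | ⟨-, h⟩ <;> omega

lemma rot_mem_HRegion {a : ℤ} {U D : Finset ℤ} (hUD : mir N U = D) {t : Tri}
    (ht : t ∈ HRegion N a a ↑U ↑D) : rot (N, 0) t ∈ HRegion N a a ↑U ↑D := by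
  have hD : ∀ x : ℤ, N - x - 1 + 1 ∈ D ↔ x + 1 ∈ U := fun x => by
    rw [← hUD, mem_mir, show N + 1 - (N - x - 1 + 1) = x + 1 by ring]
  have hU : ∀ x : ℤ, N - x - 1 + 1 ∈ U ↔ x + 1 ∈ D := fun x => by
    rw [← hUD, mem_mir, show N + 1 - (x + 1) = N - x - 1 + 1 by ring]
  obtain ⟨x, j, o⟩ := t
  simp only [HRegion, rot, Set.mem_ofPred_eq, mem_coe, hD, hU] at ht ⊢
  rcases ht with ⟨rfl, h⟩ | ⟨rfl, h⟩ | ⟨rfl, h⟩ | ⟨rfl, h⟩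
  · exact Or.inr <| Or.inr <| Or.inr
      ⟨rfl, by omega, by omega, by omega, by omega, fun hj => h.2.2.2.2 (by omega)⟩
  · exact Or.inr <| Or.inr <| Or.inl ⟨rfl, by omega, by omega, by omega, by omega⟩
  · exact Or.inr <| Or.inl ⟨rfl, by omega, by omega, by omega, by omega⟩
  · exact Or.inl ⟨rfl, by omega, by omega, by omega, by omega, fun hj => h.2.2.2.2 (by omega)⟩

variable {B : Finset ℤ}

lemma rot_mem_HBar (hB : mir N B = B) {p q : Tri} (h : (p, q) ∈ HBar ↑B) :
    (rot (N, 0) p, rot (N, 0) q) ∈ HBar ↑B := by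
  obtain ⟨i, hi, hpq | hpq⟩ := h <;> simp only [Prod.mk.injEq] at hpq <;>
    obtain ⟨rfl, rfl⟩ := hpq <;>
    refine ⟨N + 1 - i, by rw [← hB, mem_coe, mem_mir, sub_sub_cancel]; exact hi, ?_⟩ <;>
    simp only [rot, Bool.not_false, Bool.not_true, Prod.mk.injEq, Bool.true_eq_false,
      Bool.false_eq_true, and_false, false_or, or_false, and_true] <;> omega

lemma notMem_HBar_of_row_nonneg {p q : Tri} (hp : 0 ≤ p.2.1) (hq : 0 ≤ q.2.1) :
    (p, q) ∉ HBar ↑B := by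
  rintro ⟨i, -, h | h⟩ <;> simp only [Prod.mk.injEq] at h <;> obtain ⟨rfl, rfl⟩ := h <;>
    simp at hp hq

lemma notMem_HBar_of_notMem {x : ℤ} (hx : x + 1 ∉ B) :
    ((x, 0, false), (x, -1, true)) ∉ HBar ↑B ∧ ((x, -1, true), (x, 0, false)) ∉ HBar ↑B := by
  constructor <;> rintro ⟨i, hi, h | h⟩ <;>
    exact hx (by rw [show x = i - 1 from congrArg (fun e => e.1.1) h, sub_add_cancel]; exact hi)

lemma isTiling_of_upper {R : Set Tri} {Bar : Set (Tri × Tri)} {f : Tri → Tri}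
    (hR : ∀ t ∈ R, rot (N, 0) t ∈ R)
    (hBar : ∀ p q, (p, q) ∈ Bar → (rot (N, 0) p, rot (N, 0) q) ∈ Bar)
    (hf : ∀ t, f (rot (N, 0) t) = rot (N, 0) (f t)) (hout : ∀ t ∉ R, f t = t)
    (hupper : ∀ t ∈ R, 0 ≤ t.2.1 →
      f t ∈ R ∧ adj t (f t) ∧ f (f t) = t ∧ (t, f t) ∉ Bar ∧ (f t, t) ∉ Bar) :
    IsTiling R Bar f := by
  refine ⟨hout, fun t ht => ?_⟩
  by_cases hrow : 0 ≤ t.2.1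
  · exact hupper t ht hrow
  obtain ⟨s, rfl⟩ : ∃ s, t = rot (N, 0) s := ⟨rot (N, 0) t, (rot_rot _ t).symm⟩
  have hs : s ∈ R := by simpa using hR _ ht
  obtain ⟨hfs, hadj, hinv, hbar, hbar'⟩ := hupper s hs (by simp only [rot] at hrow; omega)
  rw [hf, hf, hinv]
  refine ⟨hR _ hfs, adj_rot _ hadj, rfl, fun h => hbar ?_, fun h => hbar' ?_⟩ <;>
    simpa using hBar _ _ h

end Regions

/-- `t` is the up-pointing unit triangle resting on the axis at a position of `C`. -/
def IsAxisUp (C : Finset ℤ) (t : Tri) : Prop := t.2.2 = false ∧ t.2.1 = 0 ∧ t.1 + 1 ∈ C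

instance (C : Finset ℤ) : DecidablePred (IsAxisUp C) :=
  fun t => inferInstanceAs (Decidable (t.2.2 = false ∧ t.2.1 = 0 ∧ t.1 + 1 ∈ C))

lemma mem_TRegion_iff {N : ℤ} {a : ℕ} {hd : ℤ} {U D C : Finset ℤ} {t : Tri} :
    t ∈ TRegion a (N - a) ↑(C ∪ U) ↔
      t ∈ HRegion N a hd ↑U ↑D ∧ 0 ≤ t.2.1 ∧ ¬IsAxisUp C t := by
  obtain ⟨x, j, o⟩ := t
  simp only [TRegion, HRegion, IsAxisUp, Set.mem_ofPred_eq, mem_coe, mem_union, add_sub_cancel]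
  constructor
  · rintro (⟨rfl, hj, ha, hx, hs, hd⟩ | ⟨rfl, hj, ha, hx, hs⟩)
    · exact ⟨Or.inl ⟨rfl, hj, ha, hx, hs, fun h0 hU => hd h0 (Or.inr hU)⟩, hj,
        fun ⟨_, h0, hC⟩ => hd h0 (Or.inl hC)⟩
    · exact ⟨Or.inr (Or.inl ⟨rfl, hj, ha, hx, hs⟩), hj, fun ⟨h, _⟩ => Bool.noConfusion h⟩
  · rintro ⟨⟨rfl, -, ha, hx, hs, hd⟩ | ⟨rfl, -, ha, hx, hs⟩ | ⟨-, -, h, -⟩ | ⟨-, -, h, -⟩, hj, hax⟩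
    · refine Or.inl ⟨rfl, hj, ha, hx, hs, fun h0 => ?_⟩
      rintro (hC | hU)
      exacts [hax ⟨rfl, h0, hC⟩, hd h0 hU]
    · exact Or.inr ⟨rfl, hj, ha, hx, hs⟩
    · omega
    · omega

/-- The positions of the axis crossed by a vertical lozenge of `f`. -/
noncomputable def crossingSet (N : ℤ) (f : Tri → Tri) : Finset ℤ :=
  (Icc 1 N).filter fun i => f (i - 1, 0, false) = (i - 1, -1, true)

section Crossings

variable {N : ℤ} {f : Tri → Tri}

lemma mem_crossingSet {i : ℤ} :
    i ∈ crossingSet N f ↔ (1 ≤ i ∧ i ≤ N) ∧ f (i - 1, 0, false) = (i - 1, -1, true) := by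
  rw [crossingSet, mem_filter, mem_Icc]

lemma crossingSet_subset {hu hd : ℤ} {U D B : Finset ℤ}
    (hf : IsTiling (HRegion N hu hd ↑U ↑D) (HBar ↑B) f) :
    crossingSet N f ⊆ Icc 1 N \ (U ∪ D ∪ B) := by
  intro i hi
  obtain ⟨hiN, hcross⟩ := mem_crossingSet.1 hi
  have hup : (i - 1, 0, false) ∈ HRegion N hu hd ↑U ↑D := by
    by_contra h
    simp [hf.1 _ h] at hcross
  obtain ⟨hdown, -, -, hbar, -⟩ := hf.2 _ hup
  rw [hcross] at hdown hbar
  have hiU := notMem_of_up_mem_HRegion hup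
  have hiD := notMem_of_down_mem_HRegion hdown
  rw [sub_add_cancel, mem_coe] at hiU hiD
  have hiB : i ∉ B := fun hiB => hbar ⟨i, hiB, Or.inl rfl⟩
  simp only [mem_sdiff, mem_Icc, mem_union, not_or]
  exact ⟨hiN, ⟨hiU, hiD⟩, hiB⟩

lemma rot_mem_crossingSet {R : Set Tri} {Bar : Set (Tri × Tri)} (hf : IsTiling R Bar f)
    (hsymm : ∀ t, f (rot (N, 0) t) = rot (N, 0) (f t)) {i : ℤ} (hi : i ∈ crossingSet N f) :
    N + 1 - i ∈ crossingSet N f := by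
  obtain ⟨hiN, hcross⟩ := mem_crossingSet.1 hi
  have hrot : f (N - i, -1, true) = (N - i, 0, false) := by
    have := hsymm (i - 1, 0, false)
    rw [hcross] at this
    simpa [rot, show N - (i - 1) - 1 = N - i by ring] using this
  have hmem : (N - i, -1, true) ∈ R := by
    by_contra h
    simp [hf.1 _ h] at hrot
  refine mem_crossingSet.2 ⟨by omega, ?_⟩
  rw [show N + 1 - i - 1 = N - i by ring, ← hrot, (hf.2 _ hmem).2.2.1]

end Crossings

noncomputable def upTrapezoid (N : ℤ) (a : ℕ) : Finset Tri :=
  (Icc 0 (N - 1) ×ˢ Icc 0 ((a : ℤ) - 1) ×ˢ {false}).filter fun t => t.1 + t.2.1 ≤ N - 1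

open Classical in
noncomputable def upperHalf (N : ℤ) (a : ℕ) (hd : ℤ) (U D : Finset ℤ) (o : Bool) : Finset Tri :=
  (Icc 0 (N - 1) ×ˢ Icc 0 ((a : ℤ) - 1) ×ˢ {o}).filter (· ∈ HRegion N a hd ↑U ↑D)

section Counting

variable {N : ℤ} {a : ℕ} {hd : ℤ} {U D : Finset ℤ}

lemma mem_upTrapezoid {t : Tri} :
    t ∈ upTrapezoid N a ↔
      t.2.2 = false ∧ 0 ≤ t.1 ∧ 0 ≤ t.2.1 ∧ t.2.1 < a ∧ t.1 + t.2.1 ≤ N - 1 := by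
  simp only [upTrapezoid, mem_filter, mem_product, mem_Icc, mem_singleton]
  constructor
  · rintro ⟨⟨⟨hx, -⟩, ⟨hj, ha⟩, ho⟩, hs⟩
    exact ⟨ho, hx, hj, by omega, hs⟩
  · rintro ⟨ho, hx, hj, ha, hs⟩
    exact ⟨⟨⟨hx, by omega⟩, ⟨hj, by omega⟩, ho⟩, hs⟩

lemma mem_upperHalf {o : Bool} {t : Tri} :
    t ∈ upperHalf N a hd U D o ↔ t ∈ HRegion N a hd ↑U ↑D ∧ t.2.2 = o ∧ 0 ≤ t.2.1 := by
  simp only [upperHalf, mem_filter, mem_product, mem_Icc, mem_singleton]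
  constructor
  · rintro ⟨⟨-, ⟨hj, -⟩, ho⟩, h⟩
    exact ⟨h, ho, hj⟩
  · rintro ⟨h, ho, hj⟩
    have := bounds_of_mem_HRegion h hj
    exact ⟨⟨⟨by omega, by omega⟩, ⟨hj, by omega⟩, ho⟩, h⟩

lemma card_filter_isAxisUp_upTrapezoid (hU : U ⊆ Icc 1 N) (hUa : U.card ≤ a) :
    ((upTrapezoid N a).filter (IsAxisUp U)).card = U.card := by
  refine card_nbij' (fun t => t.1 + 1) (fun i => (i - 1, 0, false)) ?_ ?_ ?_ ?_
  · intro t ht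
    exact (mem_filter.1 ht).2.2.2
  · intro i hi
    have := mem_Icc.1 (hU hi)
    have : 0 < U.card := card_pos.2 ⟨i, hi⟩
    simp only [coe_filter, Set.mem_ofPred_eq, mem_upTrapezoid, IsAxisUp, sub_add_cancel]
    exact ⟨⟨trivial, by omega, le_rfl, by omega, by omega⟩, trivial, trivial, hi⟩
  · intro t ht
    obtain ⟨-, ho, hj, -⟩ := mem_filter.1 ht
    exact Prod.ext (add_sub_cancel_right _ _) (Prod.ext hj.symm ho.symm)
  · intro i _
    exact sub_add_cancel i 1

lemma filter_not_isAxisUp_upTrapezoid :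
    (upTrapezoid N a).filter (¬IsAxisUp U ·) = upperHalf N a hd U D false := by
  ext ⟨x, j, o⟩
  simp only [mem_filter, mem_upTrapezoid, mem_upperHalf]
  simp only [HRegion, IsAxisUp, Set.mem_ofPred_eq, mem_coe]
  constructor
  · rintro ⟨⟨rfl, hx, hj, ha, hs⟩, hax⟩
    exact ⟨Or.inl ⟨rfl, hj, ha, hx, hs, fun h0 hU => hax ⟨rfl, h0, hU⟩⟩, rfl, hj⟩
  · rintro ⟨⟨-, -, ha, hx, hs, hU⟩ | ⟨ho, -⟩ | ⟨-, -, h, -⟩ | ⟨ho, -⟩, rfl, hj⟩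
    · exact ⟨⟨rfl, hx, hj, ha, hs⟩, fun ⟨_, h0, hx⟩ => hU h0 hx⟩
    · cases ho
    · omega
    · cases ho

lemma card_filter_upTrapezoid_interior :
    ((upTrapezoid N a).filter fun t => t.1 + t.2.1 ≤ N - 2).card =
      (upperHalf N a hd U D true).card := by
  refine card_nbij' (fun t => (t.1, t.2.1, true)) (fun t => (t.1, t.2.1, false)) ?_ ?_ ?_ ?_
  · rintro ⟨x, j, o⟩ ht
    simp only [coe_filter, Set.mem_ofPred_eq, mem_upTrapezoid] at ht
    simp only [mem_coe, mem_upperHalf, HRegion, Set.mem_ofPred_eq]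
    exact ⟨Or.inr (Or.inl ⟨trivial, by omega⟩), trivial, ht.1.2.2.1⟩
  · rintro ⟨x, j, o⟩ ht
    obtain ⟨hR, rfl, hj⟩ := mem_upperHalf.1 (mem_coe.1 ht)
    simp only [HRegion, Set.mem_ofPred_eq, Bool.true_eq_false, false_and, true_and,
      false_or] at hR
    simp only [coe_filter, Set.mem_ofPred_eq, mem_upTrapezoid]
    exact ⟨⟨trivial, by omega, hj, by omega, by omega⟩, by omega⟩
  · rintro ⟨x, j, o⟩ ht
    obtain ⟨rfl, -⟩ := mem_upTrapezoid.1 (mem_filter.1 ht).1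
    rfl
  · rintro ⟨x, j, o⟩ ht
    obtain ⟨-, rfl, -⟩ := mem_upperHalf.1 (mem_coe.1 ht)
    rfl

/-- The up-pointing triangles of the trapezoid touching its east side: one per row. -/
lemma card_filter_upTrapezoid_rim (haN : (a : ℤ) ≤ N) :
    ((upTrapezoid N a).filter fun t => ¬t.1 + t.2.1 ≤ N - 2).card = a := by
  refine (?_ : _ = (Icc (0 : ℤ) (a - 1)).card).trans (by simp)
  refine card_nbij' (fun t => t.2.1) (fun j => (N - 1 - j, j, false)) ?_ ?_ ?_ ?_
  · rintro ⟨x, j, o⟩ ht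
    simp only [coe_filter, Set.mem_ofPred_eq, mem_upTrapezoid, mem_coe, mem_Icc] at ht ⊢
    omega
  · intro j hj
    simp only [coe_filter, Set.mem_ofPred_eq, mem_upTrapezoid, mem_coe, mem_Icc] at hj ⊢
    exact ⟨⟨trivial, by omega, by omega, by omega, by omega⟩, by omega⟩
  · rintro ⟨x, j, o⟩ ht
    simp only [coe_filter, Set.mem_ofPred_eq, mem_upTrapezoid] at ht
    simp only [ht.1.1, Prod.mk.injEq, and_true]
    omega
  · intro j _
    rfl

lemma card_upperHalf_false_add (hU : U ⊆ Icc 1 N) (hUa : U.card ≤ a) (haN : (a : ℤ) ≤ N) :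
    (upperHalf N a hd U D false).card + U.card = (upperHalf N a hd U D true).card + a := by
  have hdents := card_filter_add_card_filter_not (s := upTrapezoid N a) (IsAxisUp U)
  have hrim := card_filter_add_card_filter_not (s := upTrapezoid N a)
    fun t => t.1 + t.2.1 ≤ N - 2
  rw [filter_not_isAxisUp_upTrapezoid (hd := hd) (D := D),
    card_filter_isAxisUp_upTrapezoid hU hUa] at hdents
  rw [card_filter_upTrapezoid_interior (hd := hd) (U := U) (D := D),
    card_filter_upTrapezoid_rim haN] at hrim
  omega

variable {Bar : Set (Tri × Tri)} {f : Tri → Tri}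

lemma card_filter_row_nonneg_upperHalf (hf : IsTiling (HRegion N a hd ↑U ↑D) Bar f) :
    ((upperHalf N a hd U D false).filter fun t => 0 ≤ (f t).2.1).card =
      (upperHalf N a hd U D true).card := by
  refine card_nbij' f f ?_ ?_ ?_ ?_
  · intro t ht
    simp only [coe_filter, Set.mem_ofPred_eq, mem_upperHalf, mem_coe] at ht ⊢
    obtain ⟨⟨hR, ho, -⟩, hrow⟩ := ht
    obtain ⟨hfR, hadj, -⟩ := hf.2 t hR
    exact ⟨hfR, by rw [adj_orientation hadj, ho]; rfl, hrow⟩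
  · intro t ht
    simp only [coe_filter, Set.mem_ofPred_eq, mem_upperHalf, mem_coe] at ht ⊢
    obtain ⟨hR, ho, hrow⟩ := ht
    obtain ⟨hfR, hadj, hinv, -⟩ := hf.2 t hR
    have hfrow : 0 ≤ (f t).2.1 := by
      by_contra hneg
      have := (adj_across_axis hadj hrow (by omega)).1
      rw [this] at ho
      exact Bool.false_ne_true ho
    exact ⟨⟨hfR, by rw [adj_orientation hadj, ho]; rfl, hfrow⟩, by rwa [hinv]⟩
  · intro t ht
    exact (hf.2 t (mem_upperHalf.1 (mem_filter.1 ht).1).1).2.2.1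
  · intro t ht
    exact (hf.2 t (mem_upperHalf.1 ht).1).2.2.1

lemma card_filter_row_neg_upperHalf (hf : IsTiling (HRegion N a hd ↑U ↑D) Bar f) :
    ((upperHalf N a hd U D false).filter fun t => ¬0 ≤ (f t).2.1).card =
      (crossingSet N f).card := by
  have hcross : ∀ t ∈ (upperHalf N a hd U D false).filter fun t => ¬0 ≤ (f t).2.1,
      t ∈ HRegion N a hd ↑U ↑D ∧ t = (t.1, 0, false) ∧ f t = (t.1, -1, true) := by
    intro t ht
    simp only [mem_filter, mem_upperHalf, not_le] at ht
    obtain ⟨⟨hR, -, hj⟩, hneg⟩ := ht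
    exact ⟨hR, adj_across_axis (hf.2 t hR).2.1 hj hneg⟩
  refine card_nbij' (fun t => t.1 + 1) (fun i => (i - 1, 0, false)) ?_ ?_ ?_ ?_
  · intro t ht
    obtain ⟨hR, ht, hft⟩ := hcross t ht
    have hj : t.2.1 = 0 := by rw [ht]
    have := bounds_of_mem_HRegion hR hj.ge
    refine mem_crossingSet.2 ⟨show 1 ≤ t.1 + 1 ∧ t.1 + 1 ≤ N by omega, ?_⟩
    rw [add_sub_cancel_right, ← ht, hft]
  · intro i hi
    obtain ⟨-, hcross⟩ := mem_crossingSet.1 hi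
    have hR : (i - 1, 0, false) ∈ HRegion N a hd ↑U ↑D :=
      by_contra fun h => by simp [hf.1 _ h] at hcross
    simp only [coe_filter, Set.mem_ofPred_eq, mem_upperHalf, not_le, hcross]
    exact ⟨⟨hR, trivial, le_rfl⟩, by norm_num⟩
  · intro t ht
    simp only [add_sub_cancel_right]
    exact (hcross t ht).2.1.symm
  · intro i _
    simp

/-- Counting the two orientations in the upper half: the vertical lozenges across the axis
make up the difference. -/
theorem card_crossingSet_add_card (hf : IsTiling (HRegion N a hd ↑U ↑D) Bar f)
    (hU : U ⊆ Icc 1 N) (hUa : U.card ≤ a) (haN : (a : ℤ) ≤ N) :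
    (crossingSet N f).card + U.card = a := by
  have := card_upperHalf_false_add (hd := hd) (D := D) hU hUa haN
  have := card_filter_add_card_filter_not (s := upperHalf N a hd U D false)
    fun t => 0 ≤ (f t).2.1
  rw [card_filter_row_nonneg_upperHalf hf, card_filter_row_neg_upperHalf hf] at this
  omega

/-- In a symmetric tiling, the crossing set is symmetric of even size `y`, hence avoids the
centre; since only `y + 1` free positions are available, it is all of them but the centre. -/
theorem crossingSet_eq_erase {B : Finset ℤ} {y : ℕ} {mid : ℤ} (hy : Even y)
    (hmid : 2 * mid = N + 1) (hU : U ⊆ Icc 1 N) (ha : a = y + U.card) (haN : (a : ℤ) ≤ N)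
    (hmidF : mid ∈ Icc 1 N \ (U ∪ D ∪ B)) (hfree : (Icc 1 N \ (U ∪ D ∪ B)).card = y + 1)
    (hf : IsTiling (HRegion N a hd ↑U ↑D) (HBar ↑B) f)
    (hsymm : ∀ t, f (rot (N, 0) t) = rot (N, 0) (f t)) :
    crossingSet N f = (Icc 1 N \ (U ∪ D ∪ B)).erase mid := by
  have hcard : (crossingSet N f).card = y := by
    have := card_crossingSet_add_card hf hU (by omega) haN
    omega
  have hmid_notMem : mid ∉ crossingSet N f := by
    refine (even_card_iff_notMem_of_reflect fun i hi => ?_).1 (hcard ▸ hy)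
    rw [hmid]
    exact rot_mem_crossingSet hf hsymm hi
  refine eq_of_subset_of_card_le (fun i hi => mem_erase.2 ⟨?_, crossingSet_subset hf hi⟩) ?_
  · rintro rfl
    exact hmid_notMem hi
  · rw [card_erase_of_mem hmidF, hfree, hcard]
    omega

end Counting

def addCrossings (C : Finset ℤ) (g : Tri → Tri) (t : Tri) : Tri :=
  if IsAxisUp C t then (t.1, -1, true) else g t

def symmExtend (N : ℤ) (C : Finset ℤ) (g : Tri → Tri) (t : Tri) : Tri :=
  if 0 ≤ t.2.1 then addCrossings C g t else rot (N, 0) (addCrossings C g (rot (N, 0) t))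

section Extension

variable {N : ℤ} {a : ℕ} {U D B C : Finset ℤ}

lemma symmExtend_rot (g : Tri → Tri) (t : Tri) :
    symmExtend N C g (rot (N, 0) t) = rot (N, 0) (symmExtend N C g t) := by
  by_cases ht : 0 ≤ t.2.1
  · have : ¬0 ≤ (rot (N, 0) t).2.1 := by simp only [rot]; omega
    simp [symmExtend, ht, this]
  · have : 0 ≤ (rot (N, 0) t).2.1 := by simp only [rot]; omega
    simp [symmExtend, ht, this]

lemma verticalLozenge_mem_HRegion (hC : C ⊆ Icc 1 N \ (U ∪ D ∪ B)) (hCa : C.card ≤ a)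
    {t : Tri} (hax : IsAxisUp C t) :
    t ∈ HRegion N a a ↑U ↑D ∧ (t.1, -1, true) ∈ HRegion N a a ↑U ↑D ∧ t.1 + 1 ∉ B := by
  obtain ⟨x, j, o⟩ := t
  obtain ⟨rfl, rfl, hx⟩ := hax
  have : 0 < C.card := card_pos.2 ⟨_, hx⟩
  have := hC hx
  simp only [mem_sdiff, mem_Icc, mem_union, not_or] at this
  simp only [HRegion, Set.mem_ofPred_eq, mem_coe]
  exact ⟨Or.inl ⟨trivial, le_rfl, by omega, by omega, by omega, fun _ => this.2.1.1⟩,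
    Or.inr <| Or.inr <| Or.inr ⟨trivial, by omega, le_rfl, by omega, by omega, fun _ => this.2.1.2⟩,
    this.2.2⟩

theorem isTiling_symmExtend {g : Tri → Tri} (hUD : mir N U = D) (hB : mir N B = B)
    (hC : C ⊆ Icc 1 N \ (U ∪ D ∪ B)) (hCsymm : ∀ i ∈ C, N + 1 - i ∈ C) (hCa : C.card ≤ a)
    (hg : IsTiling (TRegion a (N - a) ↑(C ∪ U)) ∅ g) :
    IsTiling (HRegion N a a ↑U ↑D) (HBar ↑B) (symmExtend N C g) := by
  set R := HRegion N a a ↑U ↑D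
  have hupper : ∀ t, 0 ≤ t.2.1 → symmExtend N C g t = addCrossings C g t := fun t ht => if_pos ht
  refine isTiling_of_upper (fun t ht => rot_mem_HRegion hUD ht) (fun p q h => rot_mem_HBar hB h)
    (symmExtend_rot g) ?_ ?_
  · have hfix : ∀ t ∉ R, 0 ≤ t.2.1 → symmExtend N C g t = t := by
      intro t ht hrow
      rw [hupper t hrow, addCrossings,
        if_neg fun hax => ht (verticalLozenge_mem_HRegion hC hCa hax).1]
      exact hg.1 t fun hT => ht (mem_TRegion_iff.1 hT).1
    intro t ht
    by_cases hrow : 0 ≤ t.2.1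
    · exact hfix t ht hrow
    obtain ⟨s, rfl⟩ : ∃ s, t = rot (N, 0) s := ⟨rot (N, 0) t, (rot_rot _ t).symm⟩
    have hs : s ∉ R := fun hs => ht (rot_mem_HRegion hUD hs)
    rw [symmExtend_rot, hfix s hs (by simp only [rot] at hrow; omega)]
  · intro t ht hrow
    rw [hupper t hrow, addCrossings]
    split_ifs with hax
    · obtain ⟨-, hRd, hxB⟩ := verticalLozenge_mem_HRegion hC hCa hax
      obtain ⟨x, j, o⟩ := t
      obtain ⟨rfl, rfl, hx⟩ := hax
      have hrot : IsAxisUp C (rot (N, 0) (x, -1, true)) := by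
        refine ⟨rfl, by simp [rot], ?_⟩
        simpa [rot, show N - x - 1 + 1 = N + 1 - (x + 1) by ring] using hCsymm _ hx
      refine ⟨hRd, Or.inl ⟨rfl, rfl, Or.inr (Or.inr ⟨rfl, by simp⟩)⟩, ?_,
        notMem_HBar_of_notMem hxB⟩
      rw [symmExtend, if_neg (by simp), addCrossings, if_pos hrot]
      simp only [rot, Bool.not_true, Prod.mk.injEq, and_true]
      omega
    · have hT : t ∈ TRegion a (N - a) ↑(C ∪ U) := mem_TRegion_iff.2 ⟨ht, hrow, hax⟩
      obtain ⟨hgT, hadj, hinv, -⟩ := hg.2 t hT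
      obtain ⟨hgR, hgrow, hgax⟩ := mem_TRegion_iff.1 hgT
      refine ⟨hgR, hadj, ?_, notMem_HBar_of_row_nonneg hrow hgrow,
        notMem_HBar_of_row_nonneg hgrow hrow⟩
      rw [hupper _ hgrow, addCrossings, if_neg hgax, hinv]

open Classical in
theorem isTiling_piecewise {hd : ℤ} {Bar : Set (Tri × Tri)} {f : Tri → Tri}
    (hf : IsTiling (HRegion N a hd ↑U ↑D) Bar f) (hC : crossingSet N f = C) :
    IsTiling (TRegion a (N - a) ↑(C ∪ U)) ∅ ((TRegion a (N - a) ↑(C ∪ U)).piecewise f id) := by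
  set T := TRegion a (N - a) ↑(C ∪ U)
  refine ⟨fun t ht => Set.piecewise_eq_of_notMem _ _ _ ht, fun t ht => ?_⟩
  obtain ⟨hR, hrow, hax⟩ := mem_TRegion_iff.1 ht
  obtain ⟨hfR, hadj, hinv, -⟩ := hf.2 t hR
  have hfrow : 0 ≤ (f t).2.1 := by
    by_contra hneg
    obtain ⟨ht', hft⟩ := adj_across_axis hadj hrow (by omega)
    refine hax ⟨by rw [ht'], by rw [ht'], ?_⟩
    rw [← hC, mem_crossingSet, add_sub_cancel_right, ← ht', hft]
    have := bounds_of_mem_HRegion hR hrow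
    exact ⟨by omega, rfl⟩
  have hfax : ¬IsAxisUp C (f t) := by
    rintro ⟨ho, hj, hx⟩
    rw [← hC, mem_crossingSet, add_sub_cancel_right] at hx
    have := hx.2
    rw [show ((f t).1, 0, false) = f t from Prod.ext rfl (Prod.ext hj.symm ho.symm), hinv] at this
    rw [this] at hrow
    simp at hrow
  have hfT : f t ∈ T := mem_TRegion_iff.2 ⟨hfR, hfrow, hfax⟩
  rw [Set.piecewise_eq_of_mem _ _ _ ht, Set.piecewise_eq_of_mem _ _ _ hfT, hinv]
  exact ⟨hfT, hadj, rfl, Set.notMem_empty _, Set.notMem_empty _⟩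

open Classical in
lemma symmExtend_piecewise {f : Tri → Tri} (hf : IsTiling (HRegion N a a ↑U ↑D) (HBar ↑B) f)
    (hsymm : ∀ t, f (rot (N, 0) t) = rot (N, 0) (f t)) (hC : crossingSet N f = C) :
    symmExtend N C ((TRegion a (N - a) ↑(C ∪ U)).piecewise f id) = f := by
  have hupper : ∀ t, 0 ≤ t.2.1 →
      symmExtend N C ((TRegion a (N - a) ↑(C ∪ U)).piecewise f id) t = f t := by
    intro t hrow
    rw [symmExtend, if_pos hrow, addCrossings]
    split_ifs with hax
    · obtain ⟨ho, hj, hx⟩ := hax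
      rw [← hC, mem_crossingSet, add_sub_cancel_right] at hx
      rw [show t = (t.1, 0, false) from Prod.ext rfl (Prod.ext hj ho), hx.2]
    · by_cases hT : t ∈ TRegion a (N - a) ↑(C ∪ U)
      · exact Set.piecewise_eq_of_mem _ _ _ hT
      · rw [Set.piecewise_eq_of_notMem _ _ _ hT, id, hf.1 t fun hR => hT ?_]
        exact mem_TRegion_iff.2 ⟨hR, hrow, hax⟩
  funext t
  by_cases hrow : 0 ≤ t.2.1
  · exact hupper t hrow
  obtain ⟨s, rfl⟩ : ∃ s, t = rot (N, 0) s := ⟨rot (N, 0) t, (rot_rot _ t).symm⟩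
  rw [symmExtend_rot, hsymm, hupper s (by simp only [rot] at hrow; omega)]

open Classical in
lemma piecewise_symmExtend {g : Tri → Tri} (hg : IsTiling (TRegion a (N - a) ↑(C ∪ U)) ∅ g) :
    (TRegion a (N - a) ↑(C ∪ U)).piecewise (symmExtend N C g) id = g := by
  funext t
  by_cases hT : t ∈ TRegion a (N - a) ↑(C ∪ U)
  · obtain ⟨-, hrow, hax⟩ := mem_TRegion_iff (hd := 0) (D := ∅).1 hT
    rw [Set.piecewise_eq_of_mem _ _ _ hT, symmExtend, if_pos hrow, addCrossings, if_neg hax]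
  · rw [Set.piecewise_eq_of_notMem _ _ _ hT, hg.1 t hT, id]

theorem Mc_eq_MT_of_crossingSet_eq (hUD : mir N U = D) (hB : mir N B = B)
    (hC : C ⊆ Icc 1 N \ (U ∪ D ∪ B)) (hCsymm : ∀ i ∈ C, N + 1 - i ∈ C) (hCa : C.card ≤ a)
    (hforced : ∀ f, IsTiling (HRegion N a a ↑U ↑D) (HBar ↑B) f →
      (∀ t, f (rot (N, 0) t) = rot (N, 0) (f t)) → crossingSet N f = C) :
    Mc (N, 0) (HRegion N a a ↑U ↑D) (HBar ↑B) = MT a (N - a) (C ∪ U) := by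
  classical
  exact Nat.card_congr
    { toFun := fun f => ⟨_, isTiling_piecewise f.2.1 (hforced _ f.2.1 f.2.2)⟩
      invFun := fun g => ⟨_, isTiling_symmExtend hUD hB hC hCsymm hCa g.2, symmExtend_rot g.1⟩
      left_inv := fun f => Subtype.ext (symmExtend_piecewise f.2.1 f.2.2 (hforced _ f.2.1 f.2.2))
      right_inv := fun g => Subtype.ext (piecewise_symmExtend g.2) }

end Extension

theorem Mc_HRegion_eq_MT {N : ℤ} {a y : ℕ} {U D B : Finset ℤ} {mid : ℤ} (hy : Even y)
    (hmid : 2 * mid = N + 1) (hUD : mir N U = D) (hB : mir N B = B) (hU : U ⊆ Icc 1 N)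
    (ha : a = y + U.card) (hmidO : mid ∉ U ∪ D ∪ B)
    (hfree : (Icc 1 N \ (U ∪ D ∪ B)).card = y + 1) :
    Mc (N, 0) (HRegion N a a ↑U ↑D) (HBar ↑B) =
      MT a (N - a) ((Icc 1 N \ (U ∪ D ∪ B)).erase mid ∪ U) := by
  set F := Icc 1 N \ (U ∪ D ∪ B)
  have hsymm : mir N (U ∪ D ∪ B) = U ∪ D ∪ B := by
    rw [mir_union, mir_union, hUD, hB, ← hUD, mir_mir, union_comm U]
  obtain ⟨i, hi⟩ : F.Nonempty := card_pos.1 (by omega)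
  have hmidF : mid ∈ F := by
    have := mem_Icc.1 (mem_sdiff.1 hi).1
    exact mem_sdiff.2 ⟨mem_Icc.2 ⟨by omega, by omega⟩, hmidO⟩
  have haN : (a : ℤ) ≤ N := by
    have hdisj : Disjoint F U :=
      disjoint_sdiff_self_left.mono_right (subset_union_left.trans subset_union_left)
    have : (F ∪ U).card ≤ (Icc 1 N).card := card_le_card (union_subset sdiff_subset hU)
    rw [card_union_of_disjoint hdisj, hfree, Int.card_Icc] at this
    omega
  refine Mc_eq_MT_of_crossingSet_eq hUD hB (erase_subset _ _) (fun i hi => ?_) ?_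
    fun f hf hsymm => crossingSet_eq_erase hy hmid hU ha haN hmidF hfree hf hsymm
  · obtain ⟨hne, hiF⟩ := mem_erase.1 hi
    exact mem_erase.2 ⟨by omega, (mem_mir_sdiff_iff hsymm).2 hiF⟩
  · rw [card_erase_of_mem hmidF, hfree]
    omega

section LeftHalf

variable {N : ℕ} {V W : Finset ℤ}

lemma disjoint_mir_of_subset_half (hV : V ⊆ Icc 1 ((N / 2 : ℕ) : ℤ))
    (hW : W ⊆ Icc 1 ((N / 2 : ℕ) : ℤ)) : Disjoint V (mir N W) := by
  refine disjoint_left.2 fun i hiV hiW => ?_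
  have := mem_Icc.1 (hV hiV)
  have := mem_Icc.1 (hW (mem_mir.1 hiW))
  omega

lemma card_union_mir_of_subset_half (hV : V ⊆ Icc 1 ((N / 2 : ℕ) : ℤ))
    (hW : W ⊆ Icc 1 ((N / 2 : ℕ) : ℤ)) : (V ∪ mir N W).card = V.card + W.card := by
  rw [card_union_of_disjoint (disjoint_mir_of_subset_half hV hW), card_mir]

lemma union_mir_subset_Icc (hW : W ⊆ Icc 1 ((N / 2 : ℕ) : ℤ)) :
    W ∪ mir N W ⊆ Icc 1 (N : ℤ) := by
  refine union_subset (fun i hi => ?_) fun i hi => ?_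
  · have := mem_Icc.1 (hW hi)
    exact mem_Icc.2 ⟨by omega, by omega⟩
  · have := mem_Icc.1 (hW (mem_mir.1 hi))
    exact mem_Icc.2 ⟨by omega, by omega⟩

lemma card_sdiff_union_mir (hW : W ⊆ Icc 1 ((N / 2 : ℕ) : ℤ)) :
    (Icc 1 (N : ℤ) \ (W ∪ mir N W)).card + 2 * W.card = N := by
  have := card_le_card (union_mir_subset_Icc hW)
  rw [card_union_mir_of_subset_half hW hW, Int.card_Icc] at this
  rw [card_sdiff_of_subset (union_mir_subset_Icc hW), card_union_mir_of_subset_half hW hW,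
    Int.card_Icc]
  omega

lemma center_notMem_union_mir (hN : Odd N) (hW : W ⊆ Icc 1 ((N / 2 : ℕ) : ℤ)) :
    (((N + 1) / 2 : ℕ) : ℤ) ∉ W ∪ mir N W := by
  obtain ⟨k, rfl⟩ := hN
  rw [mem_union, mem_mir]
  rintro (h | h) <;> have := mem_Icc.1 (hW h) <;> omega

theorem McCS_eq_Mc {x y : ℕ} {U D B : Finset ℤ} (hN : N = x + y + 2 * (U ∪ D).card)
    (hU : U ⊆ Icc 1 ((N / 2 : ℕ) : ℤ)) (hD : D ⊆ Icc 1 ((N / 2 : ℕ) : ℤ)) :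
    McCS x y U D B =
      Mc (N, 0) (HRegion N (y + U.card + D.card : ℕ) (y + U.card + D.card : ℕ)
        ↑(U ∪ mir N D) ↑(D ∪ mir N U)) (HBar ↑(B ∪ mir N B)) := by
  have hNz : (x : ℤ) + y + 2 * (U ∪ D).card = N := by rw [hN]; push_cast; ring
  have hUD : (U ∪ mir N D) ∪ (D ∪ mir N U) = (U ∪ D) ∪ mir N (U ∪ D) := by
    rw [mir_union]
    ext i
    simp only [mem_union]
    tauto
  have hUD' := card_union_mir_of_subset_half (union_subset hU hD) (union_subset hU hD)
  rw [← hUD] at hUD'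
  simp only [McCS, hNz, hUD', card_union_mir_of_subset_half hU hD,
    card_union_mir_of_subset_half hD hU]
  congr 2 <;> push_cast <;> omega

end LeftHalf

theorem stmt16_general (y b : ℕ) (hy : Even y) (U D B : Finset ℤ) (hb : B.card = b)
    (n : ℕ) (hn : n = (U ∪ D).card) (N : ℕ) (hN : N = 2 * b + 1 + y + 2 * n)
    (m : ℕ) (hm : m = 2 * n - U.card - D.card)
    (hU : U ⊆ Icc 1 ((N / 2 : ℕ) : ℤ)) (hD : D ⊆ Icc 1 ((N / 2 : ℕ) : ℤ))
    (hB : B ⊆ Icc 1 ((N / 2 : ℕ) : ℤ))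
    (hBd : B ∩ (U ∪ D) = ∅)
    (O : Finset ℤ) (hO : O = (U ∪ D ∪ B) ∪ mir (N : ℤ) (U ∪ D ∪ B)) :
    McCS (2 * b + 1) y U D B =
      MT ((y + U.card + D.card : ℕ) : ℤ) ((2 * b + 1 + m : ℕ) : ℤ)
        (((Icc (1 : ℤ) (N : ℤ) \ O) \ {(((N + 1) / 2 : ℕ) : ℤ)}) ∪ U ∪ mir (N : ℤ) D) := by
  have hodd : N % 2 = 1 := by obtain ⟨k, hk⟩ := hy; omega
  have hW : U ∪ D ∪ B ⊆ Icc 1 ((N / 2 : ℕ) : ℤ) := union_subset (union_subset hU hD) hB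
  have hWcard : (U ∪ D ∪ B).card = n + b := by
    rw [card_union_of_disjoint (disjoint_iff_inter_eq_empty.2 (inter_comm B _ ▸ hBd)), hn, hb]
  have hsets : (U ∪ mir N D) ∪ (D ∪ mir N U) ∪ (B ∪ mir N B) = O := by
    rw [hO, mir_union, mir_union]
    ext i
    simp only [mem_union]
    tauto
  have hfree := card_sdiff_union_mir hW
  have hOIcc : O ⊆ Icc 1 (N : ℤ) := hO ▸ union_mir_subset_Icc hW
  have hUcard := card_union_mir_of_subset_half hU hD
  have : U.card ≤ n := hn ▸ card_le_card subset_union_left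
  have : D.card ≤ n := hn ▸ card_le_card subset_union_right
  rw [McCS_eq_Mc (by omega) hU hD, Mc_HRegion_eq_MT hy (mid := (((N + 1) / 2 : ℕ) : ℤ))
    (by omega) (by rw [mir_union, mir_mir, union_comm]) (by rw [mir_union, mir_mir, union_comm])
    ((subset_union_left.trans subset_union_left).trans (hsets ▸ hOIcc)) (by omega)
    (hsets ▸ hO ▸ center_notMem_union_mir (Nat.odd_iff.2 hodd) hW)
    (by rw [hsets, hO]; omega), hsets, sdiff_singleton_eq_erase, union_assoc]
  congr 1
  push_cast
  omega

/-- base case `x = 2b + 1`. -/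
theorem stmt16 (y b : ℕ) (hy : Even y) (U D B : Finset ℤ) (hb : B.card = b)
    (n : ℕ) (hn : n = (U ∪ D).card) (N : ℕ) (hN : N = 2 * b + 1 + y + 2 * n)
    (m : ℕ) (hm : m = 2 * n - U.card - D.card)
    (hU : U ⊆ Icc 1 ((N / 2 : ℕ) : ℤ)) (hD : D ⊆ Icc 1 ((N / 2 : ℕ) : ℤ))
    (hB : B ⊆ Icc 1 ((N / 2 : ℕ) : ℤ))
    (hBd : B ∩ (U ∪ D) = ∅)
    (hmid : (((N + 1) / 2 : ℕ) : ℤ) ∉ U ∪ D ∪ B)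
    (O : Finset ℤ) (hO : O = (U ∪ D ∪ B) ∪ mir (N : ℤ) (U ∪ D ∪ B)) :
    McCS (2 * b + 1) y U D B =
      MT ((y + U.card + D.card : ℕ) : ℤ) ((2 * b + 1 + m : ℕ) : ℤ)
        (((Icc (1 : ℤ) (N : ℤ) \ O) \ {(((N + 1) / 2 : ℕ) : ℤ)}) ∪ U ∪ mir (N : ℤ) D) :=
  stmt16_general y b hy U D B hb n hn N hN m hm hU hD hB hBd O hO

end Shuf
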